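/- arXiv:0903.3812 — 3 statements merged into one kernel-verified Lean document; each statement's English description precedes it below -/
import Mathlib

section
/- Let r, q be integers with 4 ≤ q < r+3, and suppose F_v(2_r; q) + 1 ≥ R(q−1, 3), where R denotes the Ramsey number. Then F_v(2_r; q−1) ≥ F_v(2_r; q) + 2. -/
/-!
Let `G` be a `K_{q-1}`-free graph on `m = F_v(2_r; q-1)` vertices that is not `r`-colourable
(the shift graph shows that such graphs exist). Contracting an independent set of size `k` of `G`
to a single vertex keeps it non-`r`-colourable (colourings pull back) and raises the clique number
by at most one, so `F_v(2_r; q) ≤ m - k + 1`. An independent triple gives the claim. Without one,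
`G` witnesses `m < R(q-1, 3) ≤ F_v(2_r; q) + 1`, while `G` is not complete because
`q - 1 ≤ r + 1 ≤ m`, and contracting a non-edge gives `F_v(2_r; q) ≤ m - 1`, a contradiction.
-/

/-- The chromatic number of `G` as a natural number. -/
noncomputable def chi {V : Type*} (G : SimpleGraph V) : ℕ := G.chromaticNumber.toNat

/-- The independence number of `G`: the clique number of the complement. -/
noncomputable def indepNum {V : Type*} (G : SimpleGraph V) : ℕ := Gᶜ.cliqueNum

/-- The vertex Folkman number `F_v(2_r; q)`: the minimum number of vertices of a
graph with clique number `< q` and chromatic number `≥ r + 1`. -/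
noncomputable def Fv (r q : ℕ) : ℕ :=
  sInf {n | ∃ G : SimpleGraph (Fin n), G.cliqueNum < q ∧ r + 1 ≤ chi G}

/-- The Ramsey number `R(p, 3)`: the least `n` such that every graph on at least `n`
vertices contains a `p`-clique or an independent set of size `3`. -/
noncomputable def RamseyTri (p : ℕ) : ℕ :=
  sInf {n | ∀ m, n ≤ m → ∀ G : SimpleGraph (Fin m),
    (∃ S : Finset (Fin m), G.IsNClique p S) ∨ (∃ S : Finset (Fin m), Gᶜ.IsNClique 3 S)}


open SimpleGraph Finset

namespace SimpleGraph

variable {V W : Type*} {G : SimpleGraph V}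

theorem succ_le_chi_iff [Finite V] {r : ℕ} : r + 1 ≤ chi G ↔ ¬ G.Colorable r := by
  have := Fintype.ofFinite V
  have hchi : G.chromaticNumber = chi G :=
    (ENat.natCast_toNat (chromaticNumber_ne_top_iff_exists.2 ⟨_, G.colorable_of_fintype⟩)).symm
  rw [← chromaticNumber_le_iff_colorable, hchi, Nat.cast_le, not_le, Nat.succ_le_iff]

theorem cliqueNum_lt_iff_cliqueFree [Finite V] {q : ℕ} : G.cliqueNum < q ↔ G.CliqueFree q := by
  refine ⟨fun h S hS => h.not_ge (hS.card_eq ▸ hS.isClique.card_le_cliqueNum), fun h => ?_⟩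
  obtain ⟨S, hS⟩ := G.exists_isNClique_cliqueNum
  by_contra! hq
  exact h.mono hq S hS

theorem IsClique.card_lt_of_cliqueFreeOn {s t : Finset V} {n : ℕ} (ht : G.IsClique (t : Set V))
    (hts : t ⊆ s) (hs : G.CliqueFreeOn s n) : #t < n := by
  by_contra! h
  obtain ⟨u, hut, hu⟩ := exists_subset_card_eq h
  exact hs (coe_subset.2 (hut.trans hts)) ⟨ht.subset hut, hu⟩

theorem exists_ne_not_adj_of_cliqueFree_of_not_colorable [Fintype V] {p r : ℕ}
    (hp : G.CliqueFree p) (hr : ¬ G.Colorable r) (hpr : p ≤ r + 1) :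
    ∃ x y, x ≠ y ∧ ¬ G.Adj x y := by
  by_contra! hadj
  have hcomplete : G.IsClique ((univ : Finset V) : Set V) := fun x _ y _ hxy => hadj x y hxy
  have hlt := hcomplete.card_lt_of_cliqueFreeOn subset_rfl hp.cliqueFreeOn
  have hgt := mt (G.colorable_of_fintype.mono ·) hr
  rw [card_univ] at hlt
  omega

/-- Erdős–Szekeres: `R(p, 3) ≤ C(p + 1, 2)`, since the non-neighbours of a vertex form a clique. -/
theorem card_lt_choose_of_cliqueFreeOn [DecidableEq V] [DecidableRel G.Adj] {p : ℕ}
    {s : Finset V} (hp : G.CliqueFreeOn s p) (h3 : Gᶜ.CliqueFreeOn s 3) :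
    #s < (p + 1).choose 2 := by
  induction p generalizing s with
  | zero => exact absurd (isNClique_empty.2 rfl) (hp (by simp))
  | succ p ih =>
    obtain rfl | ⟨a, ha⟩ := s.eq_empty_or_nonempty
    · simp [Nat.choose_pos]
    set N := s.filter (G.Adj a)
    set M := (s.filter fun w => ¬ G.Adj a w).erase a
    have hN : #N < (p + 1).choose 2 := by
      refine ih ?_ (h3.subset _ (coe_subset.2 (filter_subset _ _)))
      rw [show (N : Set V) = (s : Set V) ∩ G.neighborSet a by ext; simp [N]]
      exact hp.of_succ _ ha
    have hM : #M ≤ p := by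
      have hclique : G.IsClique (M : Set V) := by
        intro x hx y hy hxy
        by_contra hnadj
        simp only [M, coe_erase, coe_filter, Set.mem_sdiff, Set.mem_ofPred_eq,
          Set.mem_singleton_iff] at hx hy
        refine h3 (t := {a, x, y}) ?_ (is3Clique_triple_iff.2 ?_)
        · simp [Set.insert_subset_iff, ha, hx.1.1, hy.1.1]
        · simp only [compl_adj]
          exact ⟨⟨Ne.symm hx.2, hx.1.2⟩, ⟨Ne.symm hy.2, hy.1.2⟩, hxy, hnadj⟩
      exact Nat.lt_succ_iff.1 <|
        hclique.card_lt_of_cliqueFreeOn ((erase_subset _ _).trans (filter_subset _ _)) hp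
    have hsplit : #s = #N + #M + 1 := by
      rw [← card_filter_add_card_filter_not (p := G.Adj a),
        ← card_erase_add_one (s := {w ∈ s | ¬G.Adj a w}) (a := a) (by simp [ha])]
      rfl
    have hchoose : (p + 1 + 1).choose 2 = (p + 1).choose 2 + (p + 1) := by
      rw [Nat.choose_succ_succ' (p + 1) 1, Nat.choose_one_right, add_comm]
    omega

theorem card_lt_choose_of_cliqueFree [Fintype V] {p : ℕ}
    (hp : G.CliqueFree p) (h3 : Gᶜ.CliqueFree 3) : Fintype.card V < (p + 1).choose 2 := by
  classical
  rw [← cliqueFreeOn_univ, ← coe_univ] at hp h3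
  simpa using card_lt_choose_of_cliqueFreeOn hp h3

theorem CliqueFree.map_succ {f : V → W} (hsurj : Function.Surjective f) {w : W}
    (hinj : ∀ x y, f x = f y → f x ≠ w → x = y) {n : ℕ} (hG : G.CliqueFree n) :
    (G.map f).CliqueFree (n + 1) := by
  classical
  intro S hS
  set g := Function.surjInv hsurj
  have hfg : ∀ s, f (g s) = s := Function.surjInv_eq hsurj
  have hclique : G.IsClique ((S.erase w).image g : Set V) := by
    simp only [coe_image, coe_erase]
    rintro _ ⟨s, ⟨hsS, hsw⟩, rfl⟩ _ ⟨s', ⟨hs'S, hs'w⟩, rfl⟩ hne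
    obtain ⟨-, x, y, hadj, rfl, rfl⟩ := hS.isClique hsS hs'S (ne_of_apply_ne g hne)
    rwa [hinj (g (f x)) x (hfg _) (by rwa [hfg]), hinj (g (f y)) y (hfg _) (by rwa [hfg])]
  have hlt := hclique.card_lt_of_cliqueFreeOn subset_rfl hG.cliqueFreeOn
  rw [card_image_of_injective _ (Function.injective_surjInv hsurj)] at hlt
  have := pred_card_le_card_erase (s := S) (a := w)
  rw [hS.card_eq] at this
  omega

def shiftGraph (N : ℕ) : SimpleGraph {e : Fin N × Fin N // e.1 < e.2} :=
  SimpleGraph.fromRel fun e f => e.1.2 = f.1.1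

theorem shiftGraph_cliqueFree_three (N : ℕ) : (shiftGraph N).CliqueFree 3 := by
  intro S hS
  obtain ⟨a, b, c, hab, hac, hbc, -⟩ := is3Clique_iff.1 hS
  simp only [shiftGraph, fromRel_adj] at hab hac hbc
  have := a.2; have := b.2; have := c.2
  omega

/-- In an `r`-colouring, the sets of colours on the edges leaving the points `i` are pairwise
distinct: the edge `(i, j)` would otherwise share its colour with some `(j, k)`. -/
theorem shiftGraph_not_colorable (r : ℕ) : ¬ (shiftGraph (2 ^ r + 1)).Colorable r := by
  rintro ⟨C⟩
  let outColors (i : Fin (2 ^ r + 1)) : Finset (Fin r) :=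
    (univ.filter fun e => e.1.1 = i).image C
  have hinj : Function.Injective outColors := by
    refine Function.Injective.of_lt_imp_ne fun i j hij heq => ?_
    have hmem : C ⟨(i, j), hij⟩ ∈ outColors j := heq ▸ mem_image_of_mem C (by simp)
    obtain ⟨e, he, hCe⟩ := mem_image.1 hmem
    simp only [mem_filter, mem_univ, true_and] at he
    refine C.valid ⟨fun h => ?_, Or.inl he.symm⟩ hCe.symm
    subst h
    exact hij.ne he
  simpa using Fintype.card_le_of_injective _ hinj

end SimpleGraph

theorem lt_ramseyTri_of_cliqueFree {m p : ℕ} {G : SimpleGraph (Fin m)}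
    (hp : G.CliqueFree p) (h3 : Gᶜ.CliqueFree 3) : m < RamseyTri p := by
  have hne : (p + 1).choose 2 ∈ {n | ∀ m, n ≤ m → ∀ G : SimpleGraph (Fin m),
      (∃ S : Finset (Fin m), G.IsNClique p S) ∨ (∃ S : Finset (Fin m), Gᶜ.IsNClique 3 S)} := by
    intro m hm G
    by_contra! h
    simpa using (card_lt_choose_of_cliqueFree (G := G) h.1 h.2).trans_le hm
  by_contra! hm
  obtain ⟨S, hS⟩ | ⟨S, hS⟩ := Nat.sInf_mem ⟨_, hne⟩ m hm G
  exacts [hp S hS, h3 S hS]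

section Collapse

variable {V : Type*} [DecidableEq V] (t : Finset V)

/-- The quotient map contracting `t` to the new vertex `none`. -/
def collapse (x : V) : Option {x // x ∉ t} := if h : x ∈ t then none else some ⟨x, h⟩

variable {t}

theorem collapse_surjective (ht : t.Nonempty) : Function.Surjective (collapse t) := by
  rintro (_ | ⟨x, hx⟩)
  · obtain ⟨a, ha⟩ := ht
    exact ⟨a, by simp [collapse, ha]⟩
  · exact ⟨x, by simp [collapse, hx]⟩

theorem collapse_injOn {x y : V} (h : collapse t x = collapse t y) (hx : collapse t x ≠ none) :
    x = y := by
  unfold collapse at h hx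
  split_ifs at h hx <;> simp_all

theorem collapse_ne_of_adj {G : SimpleGraph V} (hind : G.IsIndepSet t) {x y : V}
    (hadj : G.Adj x y) : collapse t x ≠ collapse t y := by
  intro h
  unfold collapse at h
  split_ifs at h with hx hy hy
  · exact hind hx hy hadj.ne hadj
  · exact hadj.ne (by simpa using h)

theorem card_option_notMem [Fintype V] :
    Fintype.card (Option {x // x ∉ t}) = Fintype.card V - #t + 1 := by
  simp [Fintype.card_subtype_compl]

end Collapse

section Folkman

open SimpleGraph

variable {V : Type*} [Fintype V] {G : SimpleGraph V} {q r : ℕ}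

theorem exists_fin_card_cliqueNum_lt_succ_le_chi (hG : G.CliqueFree q) (hr : ¬ G.Colorable r) :
    ∃ H : SimpleGraph (Fin (Fintype.card V)), H.cliqueNum < q ∧ r + 1 ≤ chi H := by
  let e := Iso.comap (Fintype.equivFin V).symm G
  exact ⟨_, cliqueNum_lt_iff_cliqueFree.2 (hG.comap e.isContained),
    succ_le_chi_iff.2 fun h => hr (h.of_hom e.symm.toHom)⟩

theorem Fv_le_card (hG : G.CliqueFree q) (hr : ¬ G.Colorable r) : Fv r q ≤ Fintype.card V :=
  Nat.sInf_le (exists_fin_card_cliqueNum_lt_succ_le_chi hG hr)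

theorem exists_fin_Fv_cliqueFree_not_colorable (hG : G.CliqueFree q) (hr : ¬ G.Colorable r) :
    ∃ H : SimpleGraph (Fin (Fv r q)), H.CliqueFree q ∧ ¬ H.Colorable r := by
  obtain ⟨H, hH, hHr⟩ : Fv r q ∈ {n | ∃ H : SimpleGraph (Fin n), H.cliqueNum < q ∧ r + 1 ≤ chi H} :=
    Nat.sInf_mem ⟨_, exists_fin_card_cliqueNum_lt_succ_le_chi hG hr⟩
  exact ⟨H, cliqueNum_lt_iff_cliqueFree.1 hH, succ_le_chi_iff.1 hHr⟩

theorem Fv_succ_add_card_le [DecidableEq V] {t : Finset V} (ht : t.Nonempty)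
    (hind : G.IsIndepSet t) (hG : G.CliqueFree q) (hr : ¬ G.Colorable r) :
    Fv r (q + 1) + #t ≤ Fintype.card V + 1 := by
  have hle := Fv_le_card (hG.map_succ (collapse_surjective ht) (w := none)
    fun _ _ => collapse_injOn) (fun hc => hr (hc.of_hom (Hom.map _ G (collapse_ne_of_adj hind))))
  rw [card_option_notMem] at hle
  have := t.card_le_univ
  omega

end Folkman

theorem stmt7 (r q : ℕ) (hq : 4 ≤ q) (hqr : q < r + 3)
    (hR : RamseyTri (q - 1) ≤ Fv r q + 1) :
    Fv r q + 2 ≤ Fv r (q - 1) := by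
  obtain ⟨p, rfl⟩ : ∃ p, q = p + 1 := ⟨q - 1, by omega⟩
  rw [Nat.add_sub_cancel] at hR ⊢
  obtain ⟨G, hG, hGr⟩ := exists_fin_Fv_cliqueFree_not_colorable
    ((shiftGraph_cliqueFree_three _).mono (by omega : 3 ≤ p)) (shiftGraph_not_colorable r)
  by_cases h3 : Gᶜ.CliqueFree 3
  · have hRamsey := lt_ramseyTri_of_cliqueFree hG h3
    obtain ⟨x, y, hxy, hnadj⟩ := exists_ne_not_adj_of_cliqueFree_of_not_colorable hG hGr (by omega)
    have hindep : G.IsIndepSet ({x, y} : Finset _) := by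
      rw [coe_pair, IsIndepSet, Set.pairwise_pair]
      exact fun _ => ⟨hnadj, (hnadj ·.symm)⟩
    have := Fv_succ_add_card_le (insert_nonempty _ _) hindep hG hGr
    rw [card_pair hxy, Fintype.card_fin] at this
    omega
  · obtain ⟨S, hS⟩ : ∃ S, Gᶜ.IsNClique 3 S := by simpa [CliqueFree] using h3
    obtain ⟨hindep, hcard⟩ := G.isNClique_compl.1 hS
    have := Fv_succ_add_card_le (card_pos.1 (by omega)) hindep hG hGr
    rw [hcard, Fintype.card_fin] at this
    omega
end

section
/- Let q be an integer with 3 ≤ q < r+3 and let G be a graph of minimum order among all graphs H with cl(H) < q and χ(H) ≥ r+1. Then cl(G) = q − 1. -/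
/-!
If `cl(G) ≤ q - 2` then `G` is not complete, since a complete graph on at most `r` vertices
is `r`-colourable. Identifying two non-adjacent vertices gives a graph with one vertex fewer,
clique number at most `cl(G) + 1 < q`, and every colouring of it pulls back to a colouring of `G`,
so it is still not `r`-colourable. This contradicts the minimality of `G`.
-/

open Finset

namespace SimpleGraph

variable {V W : Type*} {G : SimpleGraph V}

lemma succ_le_chi_iff_not_colorable [Fintype V] {r : ℕ} : r + 1 ≤ chi G ↔ ¬ G.Colorable r := by
  have hfin : G.chromaticNumber ≠ ⊤ :=
    chromaticNumber_ne_top_iff_exists.2 ⟨_, G.colorable_of_fintype⟩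
  rw [← chromaticNumber_le_iff_colorable, not_le, chi, ← ENat.natCast_toNat hfin, Nat.cast_lt,
    ENat.toNat_natCast, Nat.succ_le_iff]

lemma Iso.chi_eq {H : SimpleGraph W} (e : G ≃g H) : chi G = chi H := by
  rw [chi, chi, chromaticNumber_congr e]

lemma Embedding.cliqueNum_le [Finite W] {H : SimpleGraph W} (f : G ↪g H) :
    G.cliqueNum ≤ H.cliqueNum := by
  obtain ⟨s, hs⟩ := G.exists_isNClique_cliqueNum
  have hclique : H.IsClique (s.map f.toEmbedding : Set W) := by
    simp only [coe_map, RelEmbedding.coe_toEmbedding]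
    rintro _ ⟨a, ha, rfl⟩ _ ⟨b, hb, rfl⟩ hab
    exact f.map_adj_iff.2 (hs.isClique ha hb (ne_of_apply_ne f hab))
  calc G.cliqueNum = #(s.map f.toEmbedding) := by rw [card_map, hs.card_eq]
    _ ≤ H.cliqueNum := hclique.card_le_cliqueNum

lemma exists_ne_not_adj_of_not_colorable_cliqueNum [Fintype V]
    (h : ¬ G.Colorable G.cliqueNum) : ∃ u v, u ≠ v ∧ ¬ G.Adj u v := by
  refine ne_top_iff_exists_not_adj.1 fun htop => h ?_
  have hclique : G.IsClique (univ : Finset V) := by simpa using isClique_univ.2 htop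
  simpa using G.colorable_of_fintype.mono hclique.card_le_cliqueNum

/-- `v` is identified with `u`, which inherits the neighbours of `v`. -/
def mergeVertex (G : SimpleGraph V) (v : V) (u : {x // x ≠ v}) : SimpleGraph {x // x ≠ v} :=
  fromRel fun a b => G.Adj a b ∨ (a = u ∧ G.Adj v b)

section mergeVertex
variable {v : V} {u : {x // x ≠ v}}

lemma adj_of_mergeVertex_adj {a b : {x // x ≠ v}} (ha : a ≠ u) (hb : b ≠ u)
    (h : (G.mergeVertex v u).Adj a b) : G.Adj a b := by
  obtain ⟨-, (h | ⟨rfl, -⟩) | (h | ⟨rfl, -⟩)⟩ := h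
  exacts [h, (ha rfl).elim, h.symm, (hb rfl).elim]

def mergeVertexHom [DecidableEq V] (h : ¬ G.Adj u v) : G →g G.mergeVertex v u where
  toFun x := if hx : x = v then u else ⟨x, hx⟩
  map_rel' {x y} hxy := by
    by_cases hx : x = v <;> by_cases hy : y = v
    · subst hx hy; exact (G.irrefl hxy).elim
    · subst hx
      simp only [dif_pos, dif_neg hy]
      exact ⟨fun hu => h (hu ▸ hxy.symm), .inl (.inr ⟨rfl, hxy⟩)⟩
    · subst hy
      simp only [dif_pos, dif_neg hx]
      exact ⟨fun hu => h (hu ▸ hxy), .inr (.inr ⟨rfl, hxy.symm⟩)⟩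
    · simp only [dif_neg hx, dif_neg hy]
      exact ⟨fun he => G.ne_of_adj hxy (congrArg Subtype.val he), .inl (.inl hxy)⟩

lemma cliqueNum_mergeVertex_le [Finite V] : (G.mergeVertex v u).cliqueNum ≤ G.cliqueNum + 1 := by
  classical
  obtain ⟨s, hs⟩ := (G.mergeVertex v u).exists_isNClique_cliqueNum
  have hclique : (G.induce {x | x ≠ v}).IsClique (s.erase u : Set {x // x ≠ v}) := by
    intro a ha b hb hab
    simp only [coe_erase, Set.mem_sdiff, mem_coe, Set.mem_singleton_iff] at ha hb
    exact adj_of_mergeVertex_adj ha.2 hb.2 (hs.isClique ha.1 hb.1 hab)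
  calc (G.mergeVertex v u).cliqueNum ≤ #(s.erase u) + 1 := by
        have := pred_card_le_card_erase (s := s) (a := u)
        rw [hs.card_eq] at this; omega
    _ ≤ G.cliqueNum + 1 := by
      gcongr; exact hclique.card_le_cliqueNum.trans (G.cliqueNum_induce_le _)

end mergeVertex
end SimpleGraph

open SimpleGraph

lemma Fv_le_card_s9 [Fintype W] {r q : ℕ} (H : SimpleGraph W) (hcl : H.cliqueNum < q)
    (hchi : r + 1 ≤ chi H) : Fv r q ≤ Fintype.card W := by
  let e := Iso.map (Fintype.equivFin W) H
  exact Nat.sInf_le ⟨_, e.symm.toEmbedding.cliqueNum_le.trans_lt hcl, e.chi_eq ▸ hchi⟩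

theorem stmt9_general {V : Type*} [Fintype V] (r q : ℕ) (hqr : q < r + 3)
    (G : SimpleGraph V) (hcl : G.cliqueNum < q) (hchi : r + 1 ≤ chi G)
    (hmin : Fintype.card V = Fv r q) :
    G.cliqueNum = q - 1 := by
  classical
  by_contra hne
  have hnotcol : ¬ G.Colorable r := succ_le_chi_iff_not_colorable.1 hchi
  obtain ⟨u, v, huv, hnadj⟩ := exists_ne_not_adj_of_not_colorable_cliqueNum
    fun hcol => hnotcol (hcol.mono (by omega))
  set H := G.mergeVertex v ⟨u, huv⟩
  have hHcl : H.cliqueNum < q := cliqueNum_mergeVertex_le.trans_lt (by omega)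
  have hHchi : r + 1 ≤ chi H :=
    succ_le_chi_iff_not_colorable.2 fun hcol => hnotcol (hcol.of_hom (mergeVertexHom hnadj))
  have hFv := Fv_le_card_s9 H hHcl hHchi
  rw [Fintype.card_subtype_compl, Fintype.card_subtype_eq] at hFv
  have hpos : 0 < Fintype.card V := Fintype.card_pos_iff.2 ⟨u⟩
  omega

theorem stmt9 {V : Type*} [Fintype V] (r q : ℕ) (hq : 3 ≤ q) (hqr : q < r + 3)
    (G : SimpleGraph V) (hcl : G.cliqueNum < q) (hchi : r + 1 ≤ chi G)
    (hmin : Fintype.card V = Fv r q) :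
    G.cliqueNum = q - 1 :=
  stmt9_general r q hqr G hcl hchi hmin
end

section
/- Let m, k be positive integers with m ≥ k+3 and 2m−1 < R(m−k, 3). Suppose F_v(2_r; r−k+1) ≥ r+m for all r ≥ m−1. Then F_v(2_r; r−k+1) = r+m for all r ≥ m−1. -/
/-! The upper bound `F_v(2_r; r-k+1) ≤ r+m` is witnessed by the join `K_{r+1-m} + H`, where `H`
is a graph on `2m-1` vertices with no `(m-k)`-clique and no independent set of size `3`, which
exists because `2m-1 < R(m-k, 3)`. A clique of the join has at most `r+1-m` vertices in
`K_{r+1-m}` and at most `m-k-1` in `H`, so fewer than `r-k+1` in all. In a proper colouring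
the vertices of `K_{r+1-m}` get `r+1-m` colours that appear nowhere on `H`, and `H` needs at
least `m` colours since its colour classes have at most two vertices; so the join needs `r+1`. -/

namespace SimpleGraph

variable {V W α : Type*}

theorem cliqueFree_iff_cliqueNum_lt [Finite V] {G : SimpleGraph V} {n : ℕ} :
    G.CliqueFree n ↔ G.cliqueNum < n := by
  refine ⟨fun h => lt_of_not_ge fun hle => ?_, fun h s hs => ?_⟩
  · obtain ⟨s, hs⟩ := G.exists_isNClique_cliqueNum
    exact h.mono hle s hs
  · exact (hs.card_eq ▸ hs.isClique.card_le_cliqueNum).not_gt h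

theorem cliqueNum_le_card [Fintype V] (G : SimpleGraph V) : G.cliqueNum ≤ Fintype.card V := by
  obtain ⟨s, hs⟩ := G.exists_isNClique_cliqueNum
  exact hs.card_eq ▸ s.card_le_univ

theorem card_le_indepNum_mul_of_colorable [Fintype V] {G : SimpleGraph V} {n : ℕ}
    (h : G.Colorable n) : Fintype.card V ≤ G.indepNum * n := by
  classical
  obtain ⟨C⟩ := h
  simpa using Finset.card_le_mul_card_image_of_maps_to (s := Finset.univ) (t := Finset.univ)
    (f := C) (fun _ _ => Finset.mem_univ _) G.indepNum fun c _ =>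
      IsIndepSet.card_le_indepNum fun v hv w hw =>
        C.isIndepSet_colorClass c (show C v = c by simpa using hv) (show C w = c by simpa using hw)

def join (G : SimpleGraph V) (H : SimpleGraph W) : SimpleGraph (V ⊕ W) where
  Adj
    | .inl v, .inl v' => G.Adj v v'
    | .inr w, .inr w' => H.Adj w w'
    | .inl _, .inr _ => True
    | .inr _, .inl _ => True
  symm := ⟨by rintro (v | w) (v' | w') h <;> first | exact h.symm | trivial⟩
  loopless := ⟨by rintro (v | w) h <;> exact h.ne rfl⟩

section join

variable {G : SimpleGraph V} {H : SimpleGraph W}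

@[simp] theorem join_adj_inl_inl {v v' : V} : (join G H).Adj (.inl v) (.inl v') ↔ G.Adj v v' :=
  Iff.rfl

@[simp] theorem join_adj_inr_inr {w w' : W} : (join G H).Adj (.inr w) (.inr w') ↔ H.Adj w w' :=
  Iff.rfl

@[simp] theorem join_adj_inl_inr {v : V} {w : W} : (join G H).Adj (.inl v) (.inr w) :=
  trivial

theorem cliqueNum_join_le [Finite V] [Finite W] :
    (join G H).cliqueNum ≤ G.cliqueNum + H.cliqueNum := by
  obtain ⟨s, hs⟩ := (join G H).exists_isNClique_cliqueNum
  have hG : G.IsClique s.toLeft := fun v hv v' hv' hne =>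
    hs.isClique (Finset.mem_toLeft.1 hv) (Finset.mem_toLeft.1 hv') (by simpa using hne)
  have hH : H.IsClique s.toRight := fun w hw w' hw' hne =>
    hs.isClique (Finset.mem_toRight.1 hw) (Finset.mem_toRight.1 hw') (by simpa using hne)
  rw [← hs.card_eq, ← Finset.card_toLeft_add_card_toRight]
  exact add_le_add hG.card_le_cliqueNum hH.card_le_cliqueNum

theorem Colorable.of_join_top [Fintype α] {n : ℕ}
    (h : (join (⊤ : SimpleGraph α) H).Colorable n) : H.Colorable (n - Fintype.card α) := by
  classical
  obtain ⟨C⟩ := h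
  set T : Finset (Fin n) := Finset.univ.image (C ∘ Sum.inl)
  have hT : T.card = Fintype.card α :=
    Finset.card_image_of_injective _ fun a b hab => by_contra fun hne => C.valid (by simpa) hab
  let C' : H.Coloring {c // c ∉ T} := Coloring.mk
    (fun w => ⟨C (.inr w), by simpa [T] using fun a => C.valid join_adj_inl_inr⟩)
    fun hww' heq => C.valid (join_adj_inr_inr.2 hww') (congrArg Subtype.val heq)
  simpa [hT] using C'.colorable

end join

end SimpleGraph

open SimpleGraph

theorem lt_chi_of_not_colorable {V : Type*} [Finite V] {G : SimpleGraph V} {r : ℕ}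
    (h : ¬ G.Colorable r) : r < chi G :=
  lt_of_not_ge fun hle => h (G.colorable_chromaticNumber_of_fintype.mono hle)

theorem Fv_le_card_s10 {V : Type*} [Fintype V] {G : SimpleGraph V} {r q : ℕ}
    (hω : G.cliqueNum < q) (hχ : ¬ G.Colorable r) : Fv r q ≤ Fintype.card V := by
  let e := Iso.map (Fintype.equivFin V) G
  refine Nat.sInf_le ⟨_, ?_, lt_chi_of_not_colorable fun h => hχ ((colorable_congr e).2 h)⟩
  rw [← cliqueFree_iff_cliqueNum_lt] at hω ⊢
  exact hω.comap e.symm.toEmbedding.isContained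

theorem exists_cliqueNum_lt_indepNum_lt_three_of_lt_ramseyTri {n p : ℕ} (h : n < RamseyTri p) :
    ∃ H : SimpleGraph (Fin n), H.cliqueNum < p ∧ H.indepNum < 3 := by
  have hn : n ∉ {n | ∀ m, n ≤ m → ∀ G : SimpleGraph (Fin m),
      (∃ S : Finset (Fin m), G.IsNClique p S) ∨ (∃ S : Finset (Fin m), Gᶜ.IsNClique 3 S)} :=
    fun hmem => (Nat.sInf_le hmem).not_gt h
  simp only [Set.mem_ofPred_eq, not_forall, not_or, not_exists] at hn
  obtain ⟨N, hnN, G, hG, hGc⟩ := hn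
  let f := Embedding.comap (Fin.castLEEmb hnN) G
  refine ⟨G.comap (Fin.castLEEmb hnN), ?_, ?_⟩
  · exact cliqueFree_iff_cliqueNum_lt.1 ((show G.CliqueFree p from hG).comap f.isContained)
  · rw [← cliqueNum_compl, ← cliqueFree_iff_cliqueNum_lt]
    exact (show Gᶜ.CliqueFree 3 from hGc).comap (Embedding.complEquiv f).isContained

theorem stmt10_general (m k : ℕ)
    (hR : 2 * m - 1 < RamseyTri (m - k))
    (hlow : ∀ r, m - 1 ≤ r → r + m ≤ Fv r (r - k + 1)) :
    ∀ r, m - 1 ≤ r → Fv r (r - k + 1) = r + m := by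
  intro r hr
  obtain ⟨H, hω, hα⟩ := exists_cliqueNum_lt_indepNum_lt_three_of_lt_ramseyTri hR
  have hω' : (join (⊤ : SimpleGraph (Fin (r + 1 - m))) H).cliqueNum < r - k + 1 := by
    have hjoin := cliqueNum_join_le (G := (⊤ : SimpleGraph (Fin (r + 1 - m)))) (H := H)
    have htop := cliqueNum_le_card (⊤ : SimpleGraph (Fin (r + 1 - m)))
    rw [Fintype.card_fin] at htop
    omega
  have hχ : ¬ (join (⊤ : SimpleGraph (Fin (r + 1 - m))) H).Colorable r := fun h => by
    have hcard := card_le_indepNum_mul_of_colorable h.of_join_top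
    rw [Fintype.card_fin, Fintype.card_fin] at hcard
    have hindep : H.indepNum * (r - (r + 1 - m)) ≤ 2 * (r - (r + 1 - m)) := by gcongr; omega
    omega
  refine le_antisymm ?_ (hlow r hr)
  calc Fv r (r - k + 1) ≤ _ := Fv_le_card_s10 hω' hχ
    _ = r + m := by simp only [Fintype.card_sum, Fintype.card_fin]; omega

theorem stmt10 (m k : ℕ) (hm : 1 ≤ m) (hk : 1 ≤ k) (hmk : k + 3 ≤ m)
    (hR : 2 * m - 1 < RamseyTri (m - k))
    (hlow : ∀ r, m - 1 ≤ r → r + m ≤ Fv r (r - k + 1)) :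
    ∀ r, m - 1 ≤ r → Fv r (r - k + 1) = r + m :=
  stmt10_general m k hR hlow
end
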